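/- arXiv:2404.08183 — 2 statements merged into one kernel-verified Lean document; each statement's English description precedes it below -/
import Mathlib

section
/- Let n ≥ 4 and let h = (1, h_1, ..., h_n) be a pure O-sequence with all entries positive. If h_1 = h_i for some i with 2 ≤ i ≤ n−2, then h_j = h_1 for all j with 1 ≤ j ≤ n−1; that is, h has the form (1, a, a, ..., a, h_n) with a = h_1. -/
/-- The degree of a monomial (exponent vector) in `s` variables. -/
def mdeg {s : ℕ} (u : Fin s → ℕ) : ℕ := ∑ i, u i

/-- A (nonempty, finite) set of monomials is an order ideal if it is closed
under divisibility (componentwise `≤` of exponent vectors). -/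
def IsOrderIdeal {s : ℕ} (A : Finset (Fin s → ℕ)) : Prop :=
  A.Nonempty ∧ ∀ u ∈ A, ∀ v : Fin s → ℕ, v ≤ u → v ∈ A

/-- `u` is a maximal element of `A` with respect to divisibility. -/
def IsMaximalIn {s : ℕ} (A : Finset (Fin s → ℕ)) (u : Fin s → ℕ) : Prop :=
  u ∈ A ∧ ∀ v ∈ A, u ≤ v → v = u

/-- An order ideal is pure if all its maximal monomials have the same degree. -/
def IsPure {s : ℕ} (A : Finset (Fin s → ℕ)) : Prop :=
  ∀ u v : Fin s → ℕ, IsMaximalIn A u → IsMaximalIn A v → mdeg u = mdeg v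

/-- The maximal degree of a monomial in `A`. -/
def topDegree {s : ℕ} (A : Finset (Fin s → ℕ)) : ℕ := A.sup mdeg

/-- The number of monomials of degree `i` in `A`. -/
def hVec {s : ℕ} (A : Finset (Fin s → ℕ)) (i : ℕ) : ℕ :=
  (A.filter (fun u => mdeg u = i)).card

/-- The h-vector `(h_0, h_1, ..., h_n)` of `A`, where `n = topDegree A`. -/
def hVector {s : ℕ} (A : Finset (Fin s → ℕ)) : List ℕ :=
  (List.range (topDegree A + 1)).map (hVec A)

/-- A finite sequence is a pure O-sequence if it is the h-vector of some
pure order ideal of monomials. -/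
def IsPureOSequence (h : List ℕ) : Prop :=
  ∃ (s : ℕ) (A : Finset (Fin s → ℕ)), IsOrderIdeal A ∧ IsPure A ∧ hVector A = h

/-!
Let `V` be the set of variables of `A`, so `h₁ = |V|`. Fix `e` with `e + 1 ≤ n`, choose for every
variable `y` a monomial `m y ∈ A` of degree `e + 1` divisible by `x_y`, and let `r k` be the least
variable `y` with `x_k ∣ m y`. A degree-`e` monomial `w ∣ m y` containing a variable of the fibre
`r⁻¹(y)` is owned by `y`. By the minimality of `r` owners are unique, and `y` owns at least
`|r⁻¹(y)|` monomials of the form `m y / x_b`; hence `h₁ ≤ h_e` for `1 ≤ e < n`.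

If `h_e = h₁` with `e ≥ 2`, every degree-`e` monomial is owned and `y` owns exactly `|r⁻¹(y)|`
of them. Counting the owned monomials `m y / x_b` shows that a variable `v` of `m (r u)` outside
the fibre of `r u` forces `m (r u) = x_u x_v^e`. It follows that a monomial of degree `e + 1` is
either a power `x_k^(e+1)` with `x_k^e ∣ m (r k)`, or equal to `m (r k)` for a variable `k` of
exponent `< e` in it (found among its variables of largest `r`-value); either way `k` determines
the monomial, so `h_(e+1) ≤ h₁`. If also `h_(e+1) = h₁`, this injection is onto `V`, which gives
every `m y` a variable `x_j` of exponent `≥ e`. Every `w` of degree `e - 1` divides some `m y`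
while containing a variable of `r⁻¹(y)`, and then `w x_j` is owned by `y`; uniqueness of owners
makes `w ↦ w x_j` injective, so `h_(e-1) ≤ h_e`. Together with `h₁ ≤ h_j`, the first step carries
`h_i = h₁` up to `h_(n-1)` and the second down to `h_1`.
-/

open Finset

section Monomial

variable {s : ℕ}

lemma mdeg_add (u v : Fin s → ℕ) : mdeg (u + v) = mdeg u + mdeg v :=
  sum_add_distrib

@[simp] lemma mdeg_single (k : Fin s) (a : ℕ) : mdeg (Pi.single k a) = a := by
  simp [mdeg]

lemma mdeg_mono {u v : Fin s → ℕ} (h : u ≤ v) : mdeg u ≤ mdeg v :=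
  sum_le_sum fun i _ => h i

lemma apply_le_mdeg (u : Fin s → ℕ) (k : Fin s) : u k ≤ mdeg u :=
  single_le_sum (fun i _ => Nat.zero_le (u i)) (mem_univ k)

lemma apply_add_apply_le_mdeg (u : Fin s → ℕ) {a b : Fin s} (hab : a ≠ b) :
    u a + u b ≤ mdeg u := by
  rw [← sum_pair hab]
  exact sum_le_sum_of_subset (subset_univ _)

lemma eq_of_le_of_mdeg_le {u v : Fin s → ℕ} (h : u ≤ v) (hd : mdeg v ≤ mdeg u) : u = v :=
  funext fun i =>
    (sum_eq_sum_iff_of_le fun i _ => h i).1 (le_antisymm (mdeg_mono h) hd) i (mem_univ i)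

lemma exists_pos_of_sum_lt_mdeg {u : Fin s → ℕ} (t : Finset (Fin s))
    (h : ∑ i ∈ t, u i < mdeg u) : ∃ j ∉ t, 1 ≤ u j := by
  by_contra! hc
  have : ∑ i ∈ t, u i = mdeg u :=
    sum_subset (subset_univ t) fun j _ hj => Nat.lt_one_iff.1 (hc j hj)
  omega

lemma single_le_iff_le_apply {u : Fin s → ℕ} {k : Fin s} {a : ℕ} :
    Pi.single k a ≤ u ↔ a ≤ u k := by
  refine ⟨fun h => by simpa using h k, fun h j => ?_⟩
  by_cases hj : j = k
  · subst hj; simpa using h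
  · simp [Pi.single_eq_of_ne hj]

lemma sub_single_apply_of_ne (u : Fin s → ℕ) {j k : Fin s} (h : j ≠ k) :
    (u - Pi.single k 1 : Fin s → ℕ) j = u j := by
  simp [Pi.single_eq_of_ne h]

lemma sub_single_apply_self (u : Fin s → ℕ) (k : Fin s) :
    (u - Pi.single k 1 : Fin s → ℕ) k = u k - 1 := by
  simp

lemma sub_single_le (u : Fin s → ℕ) (k : Fin s) : u - Pi.single k 1 ≤ u :=
  fun _ => Nat.sub_le _ _

lemma mdeg_sub_single {u : Fin s → ℕ} {k : Fin s} (hk : 1 ≤ u k) :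
    mdeg (u - Pi.single k 1) + 1 = mdeg u := by
  have := mdeg_add (u - Pi.single k 1) (Pi.single k 1)
  rwa [tsub_add_cancel_of_le (single_le_iff_le_apply.2 hk), mdeg_single, eq_comm] at this

lemma eq_of_sub_single_eq {u : Fin s → ℕ} {k k' : Fin s} (hk : 1 ≤ u k)
    (h : u - Pi.single k 1 = u - Pi.single k' 1) : k = k' := by
  by_contra hne
  have := congrFun h k
  simp only [Pi.sub_apply, Pi.single_eq_same, Pi.single_eq_of_ne hne, tsub_zero] at this
  omega

lemma le_of_sub_single_le {u M : Fin s → ℕ} {j₁ j₂ : Fin s} (hj : j₁ ≠ j₂)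
    (h₁ : u - Pi.single j₁ 1 ≤ M) (h₂ : u - Pi.single j₂ 1 ≤ M) : u ≤ M := by
  intro i
  by_cases hi : i = j₁
  · subst hi
    simpa only [sub_single_apply_of_ne _ hj] using h₂ i
  · simpa only [sub_single_apply_of_ne _ hi] using h₁ i

lemma exists_le_le_mdeg_eq {u v : Fin s → ℕ} (huv : u ≤ v) {j : ℕ} (hu : mdeg u ≤ j)
    (hv : j ≤ mdeg v) : ∃ w, u ≤ w ∧ w ≤ v ∧ mdeg w = j := by
  induction j, hu using Nat.le_induction with
  | base => exact ⟨u, le_rfl, huv, rfl⟩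
  | succ j _ ih =>
    obtain ⟨w, huw, hwv, rfl⟩ := ih (by omega)
    obtain ⟨k, hk⟩ : ∃ k, w k < v k := by
      by_contra! h
      have := mdeg_mono (show v ≤ w from h)
      omega
    refine ⟨w + Pi.single k 1, huw.trans le_self_add, fun i => ?_, by rw [mdeg_add, mdeg_single]⟩
    by_cases hi : i = k
    · subst hi; simpa using hk
    · simpa [Pi.single_eq_of_ne hi] using hwv i

end Monomial

section OrderIdeal

variable {s : ℕ} {A : Finset (Fin s → ℕ)}

def vars (A : Finset (Fin s → ℕ)) : Finset (Fin s) :=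
  univ.filter fun k => Pi.single k 1 ∈ A

def level (A : Finset (Fin s → ℕ)) (j : ℕ) : Finset (Fin s → ℕ) :=
  A.filter fun u => mdeg u = j

lemma mem_vars {k : Fin s} : k ∈ vars A ↔ Pi.single k 1 ∈ A := by
  simp [vars]

lemma mem_level {u : Fin s → ℕ} {j : ℕ} : u ∈ level A j ↔ u ∈ A ∧ mdeg u = j :=
  mem_filter

lemma card_level_one : (level A 1).card = (vars A).card := by
  refine (card_nbij (fun k => Pi.single k 1) (fun k hk => ?_) (fun k _ k' _ h => ?_)
    (fun u hu => ?_)).symm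
  · exact mem_level.2 ⟨mem_vars.1 hk, mdeg_single k 1⟩
  · simpa [Pi.single_apply, eq_comm] using congrFun h k
  · obtain ⟨huA, hu⟩ := mem_level.1 hu
    obtain ⟨k, -, hk⟩ := exists_pos_of_sum_lt_mdeg (u := u) ∅ (by simp [hu])
    have hku : Pi.single k 1 = u := eq_of_le_of_mdeg_le (single_le_iff_le_apply.2 hk) (by simp [hu])
    exact ⟨k, mem_vars.2 (hku ▸ huA), hku⟩

lemma IsOrderIdeal.mem_of_le (hA : IsOrderIdeal A) {u v : Fin s → ℕ} (hu : u ∈ A)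
    (hvu : v ≤ u) : v ∈ A :=
  hA.2 u hu v hvu

lemma IsOrderIdeal.mem_vars (hA : IsOrderIdeal A) {u : Fin s → ℕ} (hu : u ∈ A) {k : Fin s}
    (hk : 1 ≤ u k) : k ∈ vars A :=
  _root_.mem_vars.2 (hA.mem_of_le hu (single_le_iff_le_apply.2 hk))

lemma IsPure.mdeg_eq_topDegree (hA : IsOrderIdeal A) (hP : IsPure A) {u : Fin s → ℕ}
    (hu : Maximal (· ∈ A) u) : mdeg u = topDegree A := by
  have hmax {v : Fin s → ℕ} (hv : v ∈ A) (hd : topDegree A ≤ mdeg v) :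
      IsMaximalIn A v :=
    ⟨hv, fun w hw hvw => (eq_of_le_of_mdeg_le hvw (hd.trans' (le_sup hw))).symm⟩
  obtain ⟨t, ht, htop⟩ := exists_mem_eq_sup A hA.1 mdeg
  exact hP u t ⟨hu.1, fun v hv huv => le_antisymm (hu.2 hv huv) huv⟩ (hmax ht htop.le)
    |>.trans htop.symm

lemma IsPure.exists_mem_level_le (hA : IsOrderIdeal A) (hP : IsPure A) {u : Fin s → ℕ}
    (hu : u ∈ A) {j : ℕ} (hj : mdeg u ≤ j) (hjt : j ≤ topDegree A) :
    ∃ w ∈ level A j, u ≤ w := by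
  obtain ⟨v, huv, hv⟩ := A.exists_le_maximal hu
  obtain ⟨w, huw, hwv, hw⟩ :=
    exists_le_le_mdeg_eq huv hj (hjt.trans (hP.mdeg_eq_topDegree hA hv).ge)
  exact ⟨w, mem_level.2 ⟨hA.mem_of_le hv.1 hwv, hw⟩, huw⟩

lemma IsOrderIdeal.sub_single_mem_level (hA : IsOrderIdeal A) {u : Fin s → ℕ} {j : ℕ}
    (hu : u ∈ level A (j + 1)) {k : Fin s} (hk : 1 ≤ u k) : u - Pi.single k 1 ∈ level A j := by
  obtain ⟨huA, hdeg⟩ := mem_level.1 hu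
  refine mem_level.2 ⟨hA.mem_of_le huA (sub_single_le u k), ?_⟩
  have := mdeg_sub_single hk
  omega

end OrderIdeal

structure Covering {s : ℕ} (A : Finset (Fin s → ℕ)) (e : ℕ) where
  m : Fin s → Fin s → ℕ
  r : Fin s → Fin s
  m_mem : ∀ y ∈ vars A, m y ∈ level A (e + 1)
  r_mem : ∀ k ∈ vars A, r k ∈ vars A
  one_le_m_r : ∀ k ∈ vars A, 1 ≤ m (r k) k
  r_le : ∀ k ∈ vars A, ∀ y ∈ vars A, 1 ≤ m y k → r k ≤ y

namespace Covering

variable {s : ℕ} {A : Finset (Fin s → ℕ)} {e : ℕ}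

lemma nonempty (hA : IsOrderIdeal A) (hP : IsPure A) (he : e + 1 ≤ topDegree A) :
    Nonempty (Covering A e) := by
  have hm : ∀ y, ∃ w, y ∈ vars A → w ∈ level A (e + 1) ∧ 1 ≤ w y := by
    intro y
    by_cases hy : y ∈ vars A
    · obtain ⟨w, hw, hyw⟩ :=
        hP.exists_mem_level_le hA (mem_vars.1 hy) (by rw [mdeg_single]; omega) he
      exact ⟨w, fun _ => ⟨hw, single_le_iff_le_apply.1 hyw⟩⟩
    · exact ⟨0, fun h => absurd h hy⟩
  choose m hm using hm
  have hr : ∀ k, ∃ y, k ∈ vars A →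
      y ∈ vars A ∧ 1 ≤ m y k ∧ ∀ y' ∈ vars A, 1 ≤ m y' k → y ≤ y' := by
    intro k
    by_cases hk : k ∈ vars A
    · obtain ⟨y, hy, hmin⟩ := ((vars A).filter fun y => 1 ≤ m y k).exists_min_image id
        ⟨k, mem_filter.2 ⟨hk, (hm k hk).2⟩⟩
      exact ⟨y, fun _ => ⟨(mem_filter.1 hy).1, (mem_filter.1 hy).2,
        fun y' hy' h => hmin y' (mem_filter.2 ⟨hy', h⟩)⟩⟩
    · exact ⟨k, fun h => absurd h hk⟩
  choose r hr using hr
  exact ⟨⟨m, r, fun y hy => (hm y hy).1, fun k hk => (hr k hk).1, fun k hk => (hr k hk).2.1,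
    fun k hk => (hr k hk).2.2⟩⟩

variable (C : Covering A e)

def fiber (y : Fin s) : Finset (Fin s) :=
  (vars A).filter fun k => C.r k = y

open Classical in
noncomputable def owned (y : Fin s) : Finset (Fin s → ℕ) :=
  (level A e).filter fun w => w ≤ C.m y ∧ ∃ u ∈ C.fiber y, 1 ≤ w u

variable {C}

lemma mem_fiber {y k : Fin s} : k ∈ C.fiber y ↔ k ∈ vars A ∧ C.r k = y :=
  mem_filter

lemma mem_owned {y : Fin s} {w : Fin s → ℕ} :
    w ∈ C.owned y ↔ w ∈ level A e ∧ w ≤ C.m y ∧ ∃ u ∈ C.fiber y, 1 ≤ w u := by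
  simp only [owned, mem_filter]

lemma mem_vars_of_mem_fiber {y k : Fin s} (hk : k ∈ C.fiber y) : y ∈ vars A := by
  obtain ⟨hkV, rfl⟩ := mem_fiber.1 hk
  exact C.r_mem k hkV

lemma one_le_m_of_mem_fiber {y k : Fin s} (hk : k ∈ C.fiber y) : 1 ≤ C.m y k := by
  obtain ⟨hkV, rfl⟩ := mem_fiber.1 hk
  exact C.one_le_m_r k hkV

lemma m_mem_A {y : Fin s} (hy : y ∈ vars A) : C.m y ∈ A :=
  (mem_level.1 (C.m_mem y hy)).1

lemma mdeg_m {y : Fin s} (hy : y ∈ vars A) : mdeg (C.m y) = e + 1 :=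
  (mem_level.1 (C.m_mem y hy)).2

lemma r_le_of_le (hA : IsOrderIdeal A) {w : Fin s → ℕ} {y u : Fin s} (hy : y ∈ vars A)
    (hw : w ≤ C.m y) (hu : 1 ≤ w u) : C.r u ≤ y :=
  C.r_le u (hA.mem_vars (m_mem_A hy) (hu.trans (hw u))) y hy (hu.trans (hw u))

lemma le_of_mem_owned (hA : IsOrderIdeal A) {w : Fin s → ℕ} {y₁ y₂ : Fin s}
    (h₁ : w ∈ C.owned y₁) (h₂ : w ∈ C.owned y₂) : y₁ ≤ y₂ := by
  obtain ⟨-, -, u, hu, hwu⟩ := mem_owned.1 h₁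
  obtain ⟨-, hw₂, v, hv, -⟩ := mem_owned.1 h₂
  exact (mem_fiber.1 hu).2 ▸ r_le_of_le hA (mem_vars_of_mem_fiber hv) hw₂ hwu

lemma eq_of_mem_owned (hA : IsOrderIdeal A) {w : Fin s → ℕ} {y₁ y₂ : Fin s}
    (h₁ : w ∈ C.owned y₁) (h₂ : w ∈ C.owned y₂) : y₁ = y₂ :=
  le_antisymm (le_of_mem_owned hA h₁ h₂) (le_of_mem_owned hA h₂ h₁)

lemma sub_single_mem_owned (hA : IsOrderIdeal A) {y b t : Fin s} (hb : 1 ≤ C.m y b)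
    (ht : t ∈ C.fiber y) (hbt : 1 ≤ (C.m y - Pi.single b 1 : Fin s → ℕ) t) :
    C.m y - Pi.single b 1 ∈ C.owned y :=
  mem_owned.2 ⟨hA.sub_single_mem_level (C.m_mem y (mem_vars_of_mem_fiber ht)) hb,
    sub_single_le _ _, t, ht, hbt⟩

lemma card_le_card_owned (hA : IsOrderIdeal A) {y : Fin s} {S : Finset (Fin s)}
    (hS : ∀ b ∈ S, 1 ≤ C.m y b ∧ ∃ t ∈ C.fiber y, 1 ≤ (C.m y - Pi.single b 1 : Fin s → ℕ) t) :
    S.card ≤ (C.owned y).card :=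
  card_le_card_of_injOn (fun b => C.m y - Pi.single b 1)
    (fun b hb => by
      obtain ⟨hb, _, ht, hbt⟩ := hS b hb
      exact sub_single_mem_owned hA hb ht hbt)
    (fun b hb _ _ h => eq_of_sub_single_eq (hS b hb).1 h)

lemma card_fiber_le_card_owned (hA : IsOrderIdeal A) (he1 : 1 ≤ e) (y : Fin s) :
    (C.fiber y).card ≤ (C.owned y).card := by
  by_cases h2 : 2 ≤ (C.fiber y).card
  · refine card_le_card_owned hA fun b hb => ⟨one_le_m_of_mem_fiber hb, ?_⟩
    obtain ⟨t, ht, htb⟩ := exists_mem_ne h2 b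
    exact ⟨t, ht, by rw [sub_single_apply_of_ne _ htb]; exact one_le_m_of_mem_fiber ht⟩
  obtain ⟨x, hx⟩ | hempty := (C.fiber y).eq_empty_or_nonempty.symm
  · obtain ⟨b, hb, hbx⟩ : ∃ b, 1 ≤ C.m y b ∧ 1 ≤ (C.m y - Pi.single b 1 : Fin s → ℕ) x := by
      by_cases hx2 : 2 ≤ C.m y x
      · exact ⟨x, by omega, by rw [sub_single_apply_self]; omega⟩
      · obtain ⟨b, hbx, hb⟩ := exists_pos_of_sum_lt_mdeg (u := C.m y) {x}
          (by rw [sum_singleton, mdeg_m (mem_vars_of_mem_fiber hx)]; omega)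
        exact ⟨b, hb, by
          rw [sub_single_apply_of_ne _ (Ne.symm (by simpa using hbx))]
          exact one_le_m_of_mem_fiber hx⟩
    have := card_le_card_owned (S := {b}) hA (by simpa using ⟨hb, x, hx, hbx⟩)
    rw [card_singleton] at this
    omega
  · simp [hempty]

lemma sum_card_fiber : ∑ y ∈ (vars A).image C.r, (C.fiber y).card = (vars A).card :=
  (card_eq_sum_card_fiberwise fun _ hk => mem_image_of_mem C.r hk).symm

lemma sum_card_owned (hA : IsOrderIdeal A) :
    ∑ y ∈ (vars A).image C.r, (C.owned y).card =
      (((vars A).image C.r).biUnion C.owned).card :=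
  (card_biUnion fun _ _ _ _ hne =>
    disjoint_left.2 fun _ h₁ h₂ => hne (eq_of_mem_owned hA h₁ h₂)).symm

lemma biUnion_owned_subset : ((vars A).image C.r).biUnion C.owned ⊆ level A e :=
  biUnion_subset.2 fun _ _ _ hw => (mem_owned.1 hw).1

end Covering

theorem card_vars_le_card_level {s : ℕ} {A : Finset (Fin s → ℕ)} {e : ℕ} (hA : IsOrderIdeal A)
    (hP : IsPure A) (he1 : 1 ≤ e) (he : e + 1 ≤ topDegree A) :
    (vars A).card ≤ (level A e).card := by
  obtain ⟨C⟩ := Covering.nonempty hA hP he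
  calc (vars A).card = ∑ y ∈ (vars A).image C.r, (C.fiber y).card := C.sum_card_fiber.symm
    _ ≤ ∑ y ∈ (vars A).image C.r, (C.owned y).card :=
      sum_le_sum fun y _ => C.card_fiber_le_card_owned hA he1 y
    _ = _ := C.sum_card_owned hA
    _ ≤ (level A e).card := card_le_card C.biUnion_owned_subset

namespace Covering

variable {s : ℕ} {A : Finset (Fin s → ℕ)} {e : ℕ} {C : Covering A e}

lemma sum_card_owned_eq (hA : IsOrderIdeal A) (he1 : 1 ≤ e)
    (heq : (level A e).card ≤ (vars A).card) :
    ∑ y ∈ (vars A).image C.r, (C.owned y).card = ∑ y ∈ (vars A).image C.r, (C.fiber y).card := by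
  have h₁ := sum_le_sum fun y (_ : y ∈ (vars A).image C.r) => C.card_fiber_le_card_owned hA he1 y
  have h₂ := card_le_card C.biUnion_owned_subset
  rw [← C.sum_card_owned hA] at h₂
  rw [C.sum_card_fiber] at h₁ ⊢
  omega

lemma card_owned_eq_card_fiber (hA : IsOrderIdeal A) (he1 : 1 ≤ e)
    (heq : (level A e).card ≤ (vars A).card) {y : Fin s} (hy : y ∈ (vars A).image C.r) :
    (C.owned y).card = (C.fiber y).card :=
  ((sum_eq_sum_iff_of_le fun y _ => C.card_fiber_le_card_owned hA he1 y).1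
    (sum_card_owned_eq hA he1 heq).symm y hy).symm

lemma exists_mem_owned (hA : IsOrderIdeal A) (he1 : 1 ≤ e)
    (heq : (level A e).card ≤ (vars A).card) {w : Fin s → ℕ} (hw : w ∈ level A e) :
    ∃ u ∈ vars A, w ∈ C.owned (C.r u) := by
  have hcover : ((vars A).image C.r).biUnion C.owned = level A e :=
    eq_of_subset_of_card_le C.biUnion_owned_subset (by
      rw [← C.sum_card_owned hA, sum_card_owned_eq hA he1 heq, C.sum_card_fiber]
      exact heq)
  rw [← hcover] at hw
  obtain ⟨y, hy, hwy⟩ := mem_biUnion.1 hw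
  obtain ⟨u, hu, rfl⟩ := mem_image.1 hy
  exact ⟨u, hu, hwy⟩

lemma mem_owned_of_forall_r_le (hA : IsOrderIdeal A) (he1 : 1 ≤ e)
    (heq : (level A e).card ≤ (vars A).card) {w : Fin s → ℕ} {u : Fin s} (hw : w ∈ level A e)
    (hu : 1 ≤ w u) (hmax : ∀ v, 1 ≤ w v → C.r v ≤ C.r u) : w ∈ C.owned (C.r u) := by
  obtain ⟨u₀, hu₀, hw₀⟩ := exists_mem_owned hA he1 heq hw
  obtain ⟨-, hle, t, ht, hwt⟩ := mem_owned.1 hw₀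
  have : C.r u₀ = C.r u :=
    le_antisymm ((mem_fiber.1 ht).2 ▸ hmax t hwt) (r_le_of_le hA (C.r_mem u₀ hu₀) hle hu)
  rwa [← this]

lemma le_m_r_apply_of_single_mem (hA : IsOrderIdeal A) (he1 : 1 ≤ e)
    (heq : (level A e).card ≤ (vars A).card) {b : Fin s} (hb : Pi.single b e ∈ A) :
    e ≤ C.m (C.r b) b := by
  have hown := mem_owned_of_forall_r_le (C := C) hA he1 heq (mem_level.2 ⟨hb, mdeg_single b e⟩)
    (u := b) (by simpa using he1) fun v hv => by
      by_cases hvb : v = b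
      · rw [hvb]
      · simp [Pi.single_eq_of_ne hvb] at hv
  simpa using (mem_owned.1 hown).2.1 b

lemma card_le_card_fiber (hA : IsOrderIdeal A) (he1 : 1 ≤ e)
    (heq : (level A e).card ≤ (vars A).card) {y : Fin s} (hy : y ∈ (vars A).image C.r)
    {S : Finset (Fin s)}
    (hS : ∀ b ∈ S, 1 ≤ C.m y b ∧ ∃ t ∈ C.fiber y, 1 ≤ (C.m y - Pi.single b 1 : Fin s → ℕ) t) :
    S.card ≤ (C.fiber y).card :=
  (card_le_card_owned hA hS).trans (card_owned_eq_card_fiber hA he1 heq hy).le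

lemma exists_mem_fiber_sub_single_pos {u b : Fin s} (hu : u ∈ vars A) (hbu : b ≠ u) :
    ∃ t ∈ C.fiber (C.r u), 1 ≤ (C.m (C.r u) - Pi.single b 1 : Fin s → ℕ) t :=
  ⟨u, mem_fiber.2 ⟨hu, rfl⟩, by
    rw [sub_single_apply_of_ne _ (Ne.symm hbu)]
    exact C.one_le_m_r u hu⟩

lemma eq_of_mem_fiber_of_r_ne (hA : IsOrderIdeal A) (he1 : 1 ≤ e)
    (heq : (level A e).card ≤ (vars A).card) {u v t : Fin s} (hu : u ∈ vars A)
    (hv : 1 ≤ C.m (C.r u) v) (hr : C.r v ≠ C.r u) (ht : t ∈ C.fiber (C.r u)) : t = u := by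
  by_contra htu
  have hcard := card_le_card_fiber hA he1 heq (mem_image_of_mem C.r hu)
    (S := insert v (C.fiber (C.r u))) fun b hb => by
      rcases mem_insert.1 hb with rfl | hb
      · exact ⟨hv, exists_mem_fiber_sub_single_pos hu fun h => hr (h ▸ rfl)⟩
      · refine ⟨one_le_m_of_mem_fiber hb, ?_⟩
        by_cases hbu : b = u
        · subst hbu
          exact ⟨t, ht, by rw [sub_single_apply_of_ne _ htu]; exact one_le_m_of_mem_fiber ht⟩
        · exact exists_mem_fiber_sub_single_pos hu hbu
  rw [card_insert_of_notMem fun h => hr (mem_fiber.1 h).2] at hcard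
  omega

lemma m_r_eq_of_r_ne (hA : IsOrderIdeal A) (he1 : 1 ≤ e)
    (heq : (level A e).card ≤ (vars A).card) {u v : Fin s} (hu : u ∈ vars A)
    (hv : 1 ≤ C.m (C.r u) v) (hr : C.r v ≠ C.r u) :
    C.m (C.r u) = Pi.single u 1 + Pi.single v e := by
  have hvu : v ≠ u := fun h => hr (h ▸ rfl)
  have hpair : ∀ a, a ≠ v → 1 ≤ C.m (C.r u) a →
      (∃ t ∈ C.fiber (C.r u), 1 ≤ (C.m (C.r u) - Pi.single a 1 : Fin s → ℕ) t) → False := by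
    intro a hav ha hwit
    have hcard := card_le_card_fiber hA he1 heq (mem_image_of_mem C.r hu) (S := {a, v}) (by
      simp only [mem_insert, mem_singleton]
      rintro b (rfl | rfl)
      exacts [⟨ha, hwit⟩, ⟨hv, exists_mem_fiber_sub_single_pos hu hvu⟩])
    have hfib : (C.fiber (C.r u)).card ≤ 1 := card_le_one.2 fun a ha b hb =>
      (eq_of_mem_fiber_of_r_ne hA he1 heq hu hv hr ha).trans
        (eq_of_mem_fiber_of_r_ne hA he1 heq hu hv hr hb).symm
    rw [card_pair hav] at hcard
    omega
  have hsupp : ∀ a, a ≠ u → a ≠ v → C.m (C.r u) a = 0 := fun a hau hav => by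
    by_contra h
    exact hpair a hav (by omega) (exists_mem_fiber_sub_single_pos hu hau)
  have hMu : C.m (C.r u) u ≤ 1 := by
    by_contra h
    exact hpair u hvu.symm (by omega)
      ⟨u, mem_fiber.2 ⟨hu, rfl⟩, by rw [sub_single_apply_self]; omega⟩
  have hdeg := mdeg_m (C := C) (C.r_mem u hu)
  refine eq_of_le_of_mdeg_le (fun a => ?_) (by simp [mdeg_add, hdeg, add_comm])
  by_cases hau : a = u
  · rw [hau]
    simpa [Pi.single_eq_of_ne hvu.symm] using hMu
  by_cases hav : a = v
  · rw [hav]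
    have := apply_add_apply_le_mdeg (C.m (C.r u)) hvu
    have := C.one_le_m_r u hu
    simp only [Pi.add_apply, Pi.single_eq_of_ne hvu, Pi.single_eq_same, zero_add]
    omega
  · simp [hsupp a hau hav]

lemma sub_single_le_m_r (hA : IsOrderIdeal A) (he1 : 1 ≤ e)
    (heq : (level A e).card ≤ (vars A).card) {m' : Fin s → ℕ} {u j t : Fin s}
    (hm : m' ∈ level A (e + 1)) (hmax : ∀ v, 1 ≤ m' v → C.r v ≤ C.r u) (hj : 1 ≤ m' j)
    (ht : 1 ≤ (m' - Pi.single j 1 : Fin s → ℕ) t) (hrt : C.r t = C.r u) :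
    m' - Pi.single j 1 ≤ C.m (C.r u) := by
  rw [← hrt]
  exact (mem_owned.1 (mem_owned_of_forall_r_le hA he1 heq (hA.sub_single_mem_level hm hj) ht
    fun v hv => hrt ▸ hmax v (hv.trans (sub_single_le m' j v)))).2.1

lemma eq_m_r_of_ne (hA : IsOrderIdeal A) (he2 : 2 ≤ e)
    (heq : (level A e).card ≤ (vars A).card) {m' : Fin s → ℕ} {u j : Fin s}
    (hm : m' ∈ level A (e + 1)) (hu : 1 ≤ m' u) (hmax : ∀ v, 1 ≤ m' v → C.r v ≤ C.r u)
    (hju : j ≠ u) (hj : 1 ≤ m' j) : m' = C.m (C.r u) := by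
  have he1 : 1 ≤ e := by omega
  obtain ⟨hmA, hmdeg⟩ := mem_level.1 hm
  have huV : u ∈ vars A := hA.mem_vars hmA hu
  suffices h : m' ≤ C.m (C.r u) from eq_of_le_of_mdeg_le h (by rw [mdeg_m (C.r_mem u huV), hmdeg])
  -- Each `m' / x_i` still containing a variable of `r`-value `r u` divides `m (r u)`;
  -- two such `i` already give `m' ≤ m (r u)`.
  have hjle := sub_single_le_m_r hA he1 heq hm hmax hj
    (by rwa [sub_single_apply_of_ne _ hju.symm]) rfl
  by_cases hrj : C.r j = C.r u
  · exact le_of_sub_single_le hju hjle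
      (sub_single_le_m_r hA he1 heq hm hmax hu (by rwa [sub_single_apply_of_ne _ hju]) hrj)
  by_cases hMj : 1 ≤ C.m (C.r u) j
  · have hM := m_r_eq_of_r_ne hA he1 heq huV hMj hrj
    rw [hM] at hjle ⊢
    intro i
    by_cases hij : i = j
    · rw [hij]
      have := apply_add_apply_le_mdeg m' hju.symm
      simp only [Pi.add_apply, Pi.single_eq_of_ne hju, Pi.single_eq_same, zero_add]
      omega
    · simpa only [sub_single_apply_of_ne _ hij] using hjle i
  have hj1 : m' j ≤ 1 := by
    have : (m' - Pi.single j 1 : Fin s → ℕ) j ≤ C.m (C.r u) j := hjle j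
    rw [sub_single_apply_self] at this
    omega
  obtain ⟨i, hij, hi, hiu⟩ :
      ∃ i, i ≠ j ∧ 1 ≤ m' i ∧ 1 ≤ (m' - Pi.single i 1 : Fin s → ℕ) u := by
    by_cases hu2 : 2 ≤ m' u
    · exact ⟨u, hju.symm, hu, by rw [sub_single_apply_self]; omega⟩
    obtain ⟨i, hi, hi1⟩ := exists_pos_of_sum_lt_mdeg (u := m') {u, j}
      (by rw [sum_pair hju.symm, hmdeg]; omega)
    simp only [mem_insert, mem_singleton, not_or] at hi
    exact ⟨i, hi.2, hi1, by rwa [sub_single_apply_of_ne _ (Ne.symm hi.1)]⟩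
  exact le_of_sub_single_le (Ne.symm hij) hjle (sub_single_le_m_r hA he1 heq hm hmax hi hiu rfl)

lemma exists_eq_single_or_eq_m_r (hA : IsOrderIdeal A) (he2 : 2 ≤ e)
    (heq : (level A e).card ≤ (vars A).card) {m' : Fin s → ℕ} (hm : m' ∈ level A (e + 1)) :
    ∃ k ∈ vars A, (m' = Pi.single k (e + 1) ∧ e ≤ C.m (C.r k) k) ∨
      (m' = C.m (C.r k) ∧ m' k < e) := by
  have he1 : 1 ≤ e := by omega
  obtain ⟨hmA, hmdeg⟩ := mem_level.1 hm
  obtain ⟨u, hu, hmax⟩ := (univ.filter fun v => 1 ≤ m' v).exists_max_image C.r (by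
    obtain ⟨v, -, hv⟩ := exists_pos_of_sum_lt_mdeg (u := m') ∅ (by rw [sum_empty, hmdeg]; omega)
    exact ⟨v, mem_filter.2 ⟨mem_univ v, hv⟩⟩)
  replace hu : 1 ≤ m' u := (mem_filter.1 hu).2
  replace hmax : ∀ v, 1 ≤ m' v → C.r v ≤ C.r u :=
    fun v hv => hmax v (mem_filter.2 ⟨mem_univ v, hv⟩)
  have huV := hA.mem_vars hmA hu
  by_cases hpow : ∃ j ≠ u, 1 ≤ m' j
  · obtain ⟨j, hju, hj⟩ := hpow
    have hM := eq_m_r_of_ne hA he2 heq hm hu hmax hju hj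
    by_cases hue : m' u < e
    · exact ⟨u, huV, Or.inr ⟨hM, hue⟩⟩
    have hsum := apply_add_apply_le_mdeg m' hju
    by_cases hrj : C.r j = C.r u
    · exact ⟨j, hA.mem_vars hmA hj, Or.inr ⟨hrj ▸ hM, by omega⟩⟩
    have hu1 := congrFun (hM.trans (m_r_eq_of_r_ne hA he1 heq huV (hM ▸ hj) hrj)) u
    simp only [Pi.add_apply, Pi.single_eq_same, Pi.single_eq_of_ne hju.symm, add_zero] at hu1
    omega
  push Not at hpow
  have hpure : m' = Pi.single u (e + 1) := by
    refine eq_of_le_of_mdeg_le (fun i => ?_) (by simp [hmdeg])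
    by_cases hiu : i = u
    · rw [hiu]
      simpa [hmdeg] using apply_le_mdeg m' u
    · simpa [Pi.single_eq_of_ne hiu] using hpow i hiu
  refine ⟨u, huV, Or.inl ⟨hpure, le_m_r_apply_of_single_mem hA he1 heq (hA.mem_of_le hmA ?_)⟩⟩
  rw [hpure]
  exact single_le_iff_le_apply.2 (by simp)

lemma exists_injOn_vars [Nonempty (Fin s)] (hA : IsOrderIdeal A) (he2 : 2 ≤ e)
    (heq : (level A e).card ≤ (vars A).card) :
    ∃ φ : (Fin s → ℕ) → Fin s, Set.MapsTo φ (level A (e + 1)) (vars A) ∧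
      Set.InjOn φ (level A (e + 1)) ∧ ∀ m' ∈ level A (e + 1),
        e ≤ C.m (C.r (φ m')) (φ m') ∨ (m' = C.m (C.r (φ m')) ∧ m' (φ m') < e) := by
  choose! φ hφV hφ using fun m' (hm : m' ∈ level A (e + 1)) =>
    exists_eq_single_or_eq_m_r (C := C) hA he2 heq hm
  refine ⟨φ, hφV, fun m₁ h₁ m₂ h₂ h => ?_, fun m' hm => (hφ m' hm).imp And.right id⟩
  rcases hφ m₁ h₁ with ⟨hm₁, he₁⟩ | ⟨hm₁, hlt₁⟩ <;>
    rcases hφ m₂ h₂ with ⟨hm₂, he₂⟩ | ⟨hm₂, hlt₂⟩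
  · rw [hm₁, hm₂, h]
  · rw [h, ← hm₂] at he₁
    omega
  · rw [← h, ← hm₁] at he₂
    omega
  · rw [hm₁, hm₂, h]

end Covering

theorem card_level_succ_le_card_vars {s : ℕ} {A : Finset (Fin s → ℕ)} {e : ℕ}
    (hA : IsOrderIdeal A) (hP : IsPure A) (he2 : 2 ≤ e) (he : e + 1 ≤ topDegree A)
    (heq : (level A e).card ≤ (vars A).card) : (level A (e + 1)).card ≤ (vars A).card := by
  obtain ⟨C⟩ := Covering.nonempty hA hP he
  obtain hempty | ⟨m', hm'⟩ := (level A (e + 1)).eq_empty_or_nonempty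
  · simp [hempty]
  obtain ⟨k, -⟩ := C.exists_eq_single_or_eq_m_r hA he2 heq hm'
  have : Nonempty (Fin s) := ⟨k⟩
  obtain ⟨φ, hmaps, hinj, -⟩ := C.exists_injOn_vars hA he2 heq
  exact card_le_card_of_injOn φ hmaps hinj

namespace Covering

variable {s : ℕ} {A : Finset (Fin s → ℕ)} {e : ℕ} {C : Covering A e}

lemma exists_le_m_apply (hA : IsOrderIdeal A) (he2 : 2 ≤ e)
    (heq : (level A e).card ≤ (vars A).card) (hfull : (vars A).card ≤ (level A (e + 1)).card)
    {y : Fin s} (hy : y ∈ (vars A).image C.r) : ∃ j, e ≤ C.m y j := by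
  have he1 : 1 ≤ e := by omega
  obtain ⟨u, hu, rfl⟩ := mem_image.1 hy
  have : Nonempty (Fin s) := ⟨u⟩
  obtain ⟨φ, hmaps, hinj, hφ⟩ := exists_injOn_vars (C := C) hA he2 heq
  have hsurj := surjOn_of_injOn_of_card_le φ hmaps hinj hfull
  obtain ⟨m', hm', rfl⟩ := hsurj hu
  rcases hφ m' hm' with h | ⟨hmu, hlt⟩
  · exact ⟨_, h⟩
  by_cases hfib : ∃ t ∈ C.fiber (C.r (φ m')), t ≠ φ m'
  · obtain ⟨t, ht, htu⟩ := hfib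
    obtain ⟨htV, hrt⟩ := mem_fiber.1 ht
    obtain ⟨m'', hm'', rfl⟩ := hsurj htV
    rcases hφ m'' hm'' with h | ⟨hmt, -⟩
    · exact ⟨_, hrt ▸ h⟩
    · exact absurd (congrArg φ (by rw [hmt, hrt, ← hmu])) htu
  push Not at hfib
  obtain ⟨v, hv, hv1⟩ := exists_pos_of_sum_lt_mdeg (u := C.m (C.r (φ m'))) {φ m'}
    (by rw [sum_singleton, mdeg_m (C.r_mem _ hu), ← hmu]; omega)
  have hvu : v ≠ φ m' := by simpa using hv
  have hrv : C.r v ≠ C.r (φ m') := fun h =>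
    hvu (hfib v (mem_fiber.2 ⟨hA.mem_vars (m_mem_A (C.r_mem _ hu)) hv1, h⟩))
  refine ⟨v, ?_⟩
  rw [m_r_eq_of_r_ne hA he1 heq hu hv1 hrv]
  simp [Pi.single_eq_of_ne hvu]

lemma exists_le_m_r_of_mem_level_pred (hA : IsOrderIdeal A) (hP : IsPure A) (he2 : 2 ≤ e)
    (he : e ≤ topDegree A) (heq : (level A e).card ≤ (vars A).card) {w' : Fin s → ℕ}
    (hw' : w' ∈ level A (e - 1)) : ∃ u ∈ vars A, w' ≤ C.m (C.r u) ∧ 1 ≤ w' u := by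
  have he1 : 1 ≤ e := by omega
  obtain ⟨hw'A, hw'deg⟩ := mem_level.1 hw'
  obtain ⟨w, hw, hw'w⟩ := hP.exists_mem_level_le hA hw'A (by omega) he
  obtain ⟨u₀, -, hwown⟩ := exists_mem_owned (C := C) hA he1 heq hw
  obtain ⟨-, hwM, t, ht, -⟩ := mem_owned.1 hwown
  obtain ⟨htV, hrt⟩ := mem_fiber.1 ht
  rw [← hrt] at hwM
  have hle : w' ≤ C.m (C.r t) := hw'w.trans hwM
  by_cases ht' : 1 ≤ w' t
  · exact ⟨t, htV, hle, ht'⟩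
  obtain ⟨v, -, hv⟩ := exists_pos_of_sum_lt_mdeg (u := w') ∅ (by rw [sum_empty, hw'deg]; omega)
  have hvV := hA.mem_vars hw'A hv
  by_cases hrv : C.r v = C.r t
  · exact ⟨v, hvV, hrv ▸ hle, hv⟩
  have hM := m_r_eq_of_r_ne hA he1 heq htV (hv.trans (hle v)) hrv
  have hvt : v ≠ t := fun h => hrv (h ▸ rfl)
  have hpow : e ≤ C.m (C.r v) v := le_m_r_apply_of_single_mem hA he1 heq
    (hA.mem_of_le (m_mem_A (C.r_mem t htV))
      (by rw [hM]; exact single_le_iff_le_apply.2 (by simp [Pi.single_eq_of_ne hvt])))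
  refine ⟨v, hvV, fun i => show w' i ≤ C.m (C.r v) i from ?_, hv⟩
  by_cases hiv : i = v
  · rw [hiv]
    have := apply_le_mdeg w' v
    omega
  have hi : w' i ≤ C.m (C.r t) i := hle i
  rw [hM] at hi
  by_cases hit : i = t
  · rw [hit]
    omega
  · simp only [Pi.add_apply, Pi.single_eq_of_ne hit, Pi.single_eq_of_ne hiv, add_zero] at hi
    omega

lemma add_single_mem_owned (hA : IsOrderIdeal A) (he1 : 1 ≤ e) {w' : Fin s → ℕ} {u j : Fin s}
    (hw' : w' ∈ level A (e - 1)) (hu : u ∈ vars A) (hle : w' ≤ C.m (C.r u)) (hpos : 1 ≤ w' u)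
    (hj : e ≤ C.m (C.r u) j) : w' + Pi.single j 1 ∈ C.owned (C.r u) := by
  obtain ⟨-, hw'deg⟩ := mem_level.1 hw'
  have hle' : w' + Pi.single j 1 ≤ C.m (C.r u) := fun i => by
    by_cases hi : i = j
    · rw [hi]
      have := apply_le_mdeg w' j
      simp only [Pi.add_apply, Pi.single_eq_same]
      omega
    · simpa [Pi.single_eq_of_ne hi] using hle i
  refine mem_owned.2 ⟨mem_level.2 ⟨hA.mem_of_le (m_mem_A (C.r_mem u hu)) hle', ?_⟩, hle', u,
    mem_fiber.2 ⟨hu, rfl⟩, hpos.trans le_self_add⟩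
  rw [mdeg_add, mdeg_single]
  omega

lemma card_level_pred_le_card_level (C : Covering A e) (hA : IsOrderIdeal A) (hP : IsPure A)
    (he2 : 2 ≤ e) (he : e ≤ topDegree A) (heq : (level A e).card ≤ (vars A).card)
    (hfull : (vars A).card ≤ (level A (e + 1)).card) :
    (level A (e - 1)).card ≤ (level A e).card := by
  obtain hempty | ⟨w₀, hw₀⟩ := (level A (e - 1)).eq_empty_or_nonempty
  · simp [hempty]
  obtain ⟨u₀, -⟩ := exists_le_m_r_of_mem_level_pred (C := C) hA hP he2 he heq hw₀
  have : Nonempty (Fin s) := ⟨u₀⟩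
  choose! U hUV hU using fun w' (hw' : w' ∈ level A (e - 1)) =>
    exists_le_m_r_of_mem_level_pred (C := C) hA hP he2 he heq hw'
  choose! J hJ using fun y (hy : y ∈ (vars A).image C.r) =>
    exists_le_m_apply (C := C) hA he2 heq hfull hy
  have hown : ∀ w' ∈ level A (e - 1),
      w' + Pi.single (J (C.r (U w'))) 1 ∈ C.owned (C.r (U w')) := fun w' hw' =>
    add_single_mem_owned hA (by omega) hw' (hUV w' hw') (hU w' hw').1 (hU w' hw').2
      (hJ _ (mem_image_of_mem C.r (hUV w' hw')))
  refine card_le_card_of_injOn _ (fun w' hw' => (mem_owned.1 (hown w' hw')).1)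
    fun w₁ h₁ w₂ h₂ h => ?_
  have h' : w₁ + Pi.single (J (C.r (U w₁))) 1 = w₂ + Pi.single (J (C.r (U w₂))) 1 := h
  have hy := eq_of_mem_owned hA (hown w₁ h₁) (h' ▸ hown w₂ h₂)
  rw [hy] at h'
  exact add_right_cancel h'

end Covering

theorem card_level_pred_le_card_vars {s : ℕ} {A : Finset (Fin s → ℕ)} {e : ℕ}
    (hA : IsOrderIdeal A) (hP : IsPure A) (he2 : 2 ≤ e) (he : e + 2 ≤ topDegree A)
    (heq : (level A e).card ≤ (vars A).card) : (level A (e - 1)).card ≤ (vars A).card := by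
  obtain ⟨C⟩ := Covering.nonempty hA hP (e := e) (by omega)
  exact (C.card_level_pred_le_card_level hA hP he2 (by omega) heq
    (card_vars_le_card_level hA hP (by omega) he)).trans heq

theorem stmt_7_general (n : ℕ) (h : List ℕ) (hlen : h.length = n + 1)
    (hpure : IsPureOSequence h)
    (i : ℕ) (hi1 : 2 ≤ i) (hi2 : i ≤ n - 2) (hi : h.getD i 0 = h.getD 1 0) :
    ∀ j, 1 ≤ j → j ≤ n - 1 → h.getD j 0 = h.getD 1 0 := by
  obtain ⟨s, A, hA, hP, rfl⟩ := hpure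
  have htop : topDegree A = n := by simpa [hVector] using hlen
  have hget : ∀ j ≤ n, (hVector A).getD j 0 = (level A j).card := fun j hj => by
    rw [hVector, List.getD_eq_getElem?_getD, List.getElem?_map, List.getElem?_range (by omega)]
    rfl
  rw [hget i (by omega), hget 1 (by omega), card_level_one] at hi
  have hup : ∀ j, i ≤ j → j ≤ n → (level A j).card ≤ (vars A).card := by
    intro j hij hjn
    induction j, hij using Nat.le_induction with
    | base => exact hi.le
    | succ j hij ih =>
      exact card_level_succ_le_card_vars hA hP (by omega) (by omega) (ih (by omega))
  have hdown : ∀ j ≤ i, 1 ≤ j → (level A j).card ≤ (vars A).card := by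
    intro j hji hj1
    induction hji using Nat.decreasingInduction with
    | self => exact hi.le
    | of_succ k hk ih =>
      simpa using card_level_pred_le_card_vars hA hP (e := k + 1) (by omega) (by omega)
        (ih (by omega))
  intro j hj1 hjn
  rw [hget j (by omega), hget 1 (by omega), card_level_one]
  refine le_antisymm ?_ (card_vars_le_card_level hA hP hj1 (by omega))
  rcases le_total j i with hji | hij
  · exact hdown j hji hj1
  · exact hup j hij (by omega)

/-- For `n ≥ 4`, if `h = (1, h_1, ..., h_n)` is a pure O-sequence with positive
entries and `h_1 = h_i` for some `2 ≤ i ≤ n-2`, then `h_j = h_1` for all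
`1 ≤ j ≤ n-1`. -/
theorem stmt_7 (n : ℕ) (hn : 4 ≤ n) (h : List ℕ) (hlen : h.length = n + 1)
    (h0 : h.getD 0 0 = 1) (hpos : ∀ j < h.length, 0 < h.getD j 0)
    (hpure : IsPureOSequence h)
    (i : ℕ) (hi1 : 2 ≤ i) (hi2 : i ≤ n - 2) (hi : h.getD i 0 = h.getD 1 0) :
    ∀ j, 1 ≤ j → j ≤ n - 1 → h.getD j 0 = h.getD 1 0 :=
  stmt_7_general n h hlen hpure i hi1 hi2 hi
end

section
/- Let n ≥ 2 and let s_1, s_2 be nonnegative integers, not both zero. Consider the order ideal A consisting of all divisors of the monomials x_1 x_2^{n−1}, x_3 x_4^{n−1}, ..., x_{2s_1−1} x_{2s_1}^{n−1}, y_1^n, ..., y_{s_2}^n, where the x's and y's are 2s_1 + s_2 pairwise distinct variables. Then A is a pure order ideal and its h-vector is (1, 2s_1 + s_2, 2s_1 + s_2, ..., 2s_1 + s_2, s_1 + s_2), of length n+1 with n−1 middle entries equal to 2s_1 + s_2. -/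
/-- All divisors of a monomial, as a finite set. -/
def divisorSet {s : ℕ} (u : Fin s → ℕ) : Finset (Fin s → ℕ) :=
  Fintype.piFinset (fun i => Finset.range (u i + 1))

/-- The order ideal generated by a finite set of monomials: all their divisors. -/
def generatedIdeal {s : ℕ} (G : Finset (Fin s → ℕ)) : Finset (Fin s → ℕ) :=
  G.biUnion divisorSet

/-- The generators `x_1 x_2^(n-1), ..., x_{2s₁-1} x_{2s₁}^(n-1), y_1^n, ..., y_{s₂}^n`
in `2s₁ + s₂` distinct variables. -/
def gens9 (n s₁ s₂ : ℕ) : Finset (Fin (2 * s₁ + s₂) → ℕ) :=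
  ((Finset.range s₁).image (fun k => (fun i : Fin (2 * s₁ + s₂) =>
      if i.val = 2 * k then 1 else if i.val = 2 * k + 1 then n - 1 else 0))) ∪
  ((Finset.range s₂).image (fun k => (fun i : Fin (2 * s₁ + s₂) =>
      if i.val = 2 * s₁ + k then n else 0)))

/-! The generators have pairwise disjoint supports, so two distinct generators share only the
divisor `1`, and in every positive degree `i` the ideal is the disjoint union of the degree-`i`
divisors of the generators. A generator `x_a x_b^(n-1)` has the two divisors `x_b^i` and
`x_a x_b^(i-1)` in each degree `1 ≤ i < n` and itself in degree `n`; a generator `y^n` has exactly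
one divisor in each degree `i ≤ n`. All generators have degree `n`, which makes the ideal pure. -/

open Finset

section Monomials

variable {s : ℕ} {G : Finset (Fin s → ℕ)} {u v : Fin s → ℕ}

theorem mem_divisorSet : u ∈ divisorSet v ↔ u ≤ v := by
  simp [divisorSet, Fintype.mem_piFinset, Pi.le_def]

theorem mem_generatedIdeal : u ∈ generatedIdeal G ↔ ∃ g ∈ G, u ≤ g := by
  simp [generatedIdeal, mem_divisorSet]

theorem mdeg_mono_s9 : Monotone (mdeg (s := s)) :=
  fun _ _ h => sum_le_sum fun i _ => h i

theorem mdeg_eq_zero_iff : mdeg u = 0 ↔ u = 0 := by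
  simp [mdeg, sum_eq_zero_iff, funext_iff]

theorem eq_of_le_of_mdeg_eq (h : u ≤ v) (hd : mdeg u = mdeg v) : u = v :=
  funext fun i => ((sum_eq_sum_iff_of_le fun i _ => h i).mp hd) i (mem_univ i)

theorem isOrderIdeal_generatedIdeal (hG : G.Nonempty) : IsOrderIdeal (generatedIdeal G) := by
  obtain ⟨g, hg⟩ := hG
  refine ⟨⟨g, mem_generatedIdeal.mpr ⟨g, hg, le_rfl⟩⟩, fun u hu v hvu => ?_⟩
  obtain ⟨g', hg', hug'⟩ := mem_generatedIdeal.mp hu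
  exact mem_generatedIdeal.mpr ⟨g', hg', hvu.trans hug'⟩

theorem IsMaximalIn.mem_of_generatedIdeal (hu : IsMaximalIn (generatedIdeal G) u) : u ∈ G := by
  obtain ⟨g, hg, hug⟩ := mem_generatedIdeal.mp hu.1
  rwa [← hu.2 g (mem_generatedIdeal.mpr ⟨g, hg, le_rfl⟩) hug]

theorem isPure_generatedIdeal {d : ℕ} (hG : ∀ g ∈ G, mdeg g = d) :
    IsPure (generatedIdeal G) := fun u v hu hv => by
  rw [hG u hu.mem_of_generatedIdeal, hG v hv.mem_of_generatedIdeal]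

theorem topDegree_generatedIdeal {d : ℕ} (hne : G.Nonempty) (hG : ∀ g ∈ G, mdeg g = d) :
    topDegree (generatedIdeal G) = d := by
  refine le_antisymm (Finset.sup_le fun u hu => ?_) ?_
  · obtain ⟨g, hg, hug⟩ := mem_generatedIdeal.mp hu
    exact hG g hg ▸ mdeg_mono_s9 hug
  · obtain ⟨g, hg⟩ := hne
    exact hG g hg ▸ le_sup (mem_generatedIdeal.mpr ⟨g, hg, le_rfl⟩)

theorem hVec_zero {A : Finset (Fin s → ℕ)} (hA : IsOrderIdeal A) : hVec A 0 = 1 := by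
  obtain ⟨⟨u, hu⟩, hdown⟩ := hA
  rw [hVec, card_eq_one]
  refine ⟨0, eq_singleton_iff_unique_mem.mpr ⟨?_, fun v hv => ?_⟩⟩
  · exact mem_filter.mpr ⟨hdown u hu 0 fun _ => Nat.zero_le _, mdeg_eq_zero_iff.mpr rfl⟩
  · exact mdeg_eq_zero_iff.mp (mem_filter.mp hv).2

theorem hVec_divisorSet_mdeg (u : Fin s → ℕ) : hVec (divisorSet u) (mdeg u) = 1 := by
  rw [hVec, card_eq_one]
  refine ⟨u, eq_singleton_iff_unique_mem.mpr ⟨?_, fun v hv => ?_⟩⟩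
  · exact mem_filter.mpr ⟨mem_divisorSet.mpr le_rfl, rfl⟩
  · obtain ⟨hvu, hd⟩ := mem_filter.mp hv
    exact eq_of_le_of_mdeg_eq (mem_divisorSet.mp hvu) hd

theorem hVec_generatedIdeal_eq_sum
    (hG : ∀ g ∈ G, ∀ g' ∈ G, g ≠ g' → ∀ j, g j = 0 ∨ g' j = 0) {i : ℕ} (hi : i ≠ 0) :
    hVec (generatedIdeal G) i = ∑ g ∈ G, hVec (divisorSet g) i := by
  rw [hVec, generatedIdeal, filter_biUnion, card_biUnion]
  · rfl
  intro g hg g' hg' hne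
  refine disjoint_left.mpr fun u hu hu' => hi ?_
  obtain ⟨hug, rfl⟩ := mem_filter.mp hu
  have hug' := mem_divisorSet.mp (mem_filter.mp hu').1
  have hu0 : u = 0 := funext fun j => by
    rcases hG g hg g' hg' hne j with h | h
    · exact Nat.eq_zero_of_le_zero (h ▸ mem_divisorSet.mp hug j)
    · exact Nat.eq_zero_of_le_zero (h ▸ hug' j)
  exact mdeg_eq_zero_iff.mpr hu0

end Monomials

theorem List.map_range_succ_eq_cons_replicate_append {α : Type*} {f : ℕ → α} {n : ℕ} {m : α}
    (hn : 1 ≤ n) (hmid : ∀ i, 1 ≤ i → i < n → f i = m) :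
    (List.range (n + 1)).map f = f 0 :: (List.replicate (n - 1) m ++ [f n]) := by
  obtain ⟨k, rfl⟩ : ∃ k, n = k + 1 := ⟨n - 1, by omega⟩
  have hrep : (List.range k).map (f ∘ Nat.succ) = List.replicate k m := by
    refine List.eq_replicate_iff.mpr ⟨by simp, fun b hb => ?_⟩
    obtain ⟨i, hi, rfl⟩ := List.mem_map.mp hb
    exact hmid (i + 1) (by omega) (by simpa using hi)
  rw [List.range_succ_eq_map, List.range_succ]
  simp [hrep]

section Generators

variable {s₁ s₂ : ℕ}

/-- `xMonomial s₁ s₂ k a b` is `x_(2k+1)^a x_(2k+2)^b` and `yMonomial s₁ s₂ k c` is `y_(k+1)^c`: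
the variables are indexed from `0`, the `x`'s first. -/
def xMonomial (s₁ s₂ k a b : ℕ) : Fin (2 * s₁ + s₂) → ℕ := fun i =>
  if i.val = 2 * k then a else if i.val = 2 * k + 1 then b else 0

def yMonomial (s₁ s₂ k c : ℕ) : Fin (2 * s₁ + s₂) → ℕ := fun i =>
  if i.val = 2 * s₁ + k then c else 0

theorem gens9_eq (n s₁ s₂ : ℕ) : gens9 n s₁ s₂ =
    (range s₁).image (fun k => xMonomial s₁ s₂ k 1 (n - 1)) ∪
    (range s₂).image (fun k => yMonomial s₁ s₂ k n) := rfl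

theorem mdeg_xMonomial {k : ℕ} (hk : k < s₁) (a b : ℕ) :
    mdeg (xMonomial s₁ s₂ k a b) = a + b := by
  have hsplit : ∀ i, (if i = 2 * k then a else if i = 2 * k + 1 then b else 0)
      = (if i = 2 * k then a else 0) + (if i = 2 * k + 1 then b else 0) := by
    intro i; split_ifs <;> omega
  unfold mdeg xMonomial
  rw [Fin.sum_univ_eq_sum_range (fun i =>
    if i = 2 * k then a else if i = 2 * k + 1 then b else 0)]
  simp only [hsplit, sum_add_distrib, sum_ite_eq', mem_range]
  rw [if_pos (by omega), if_pos (by omega)]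

theorem mdeg_yMonomial {k : ℕ} (hk : k < s₂) (c : ℕ) : mdeg (yMonomial s₁ s₂ k c) = c := by
  unfold mdeg yMonomial
  rw [Fin.sum_univ_eq_sum_range (fun i => if i = 2 * s₁ + k then c else 0)]
  simp only [sum_ite_eq', mem_range]
  rw [if_pos (by omega)]

theorem le_xMonomial_iff {k a b : ℕ} (hk : k < s₁) {u : Fin (2 * s₁ + s₂) → ℕ} :
    u ≤ xMonomial s₁ s₂ k a b ↔ ∃ a' ≤ a, ∃ b' ≤ b, u = xMonomial s₁ s₂ k a' b' := by
  constructor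
  · intro h
    refine ⟨u ⟨2 * k, by omega⟩, by simpa [xMonomial] using h ⟨2 * k, by omega⟩,
      u ⟨2 * k + 1, by omega⟩, by simpa [xMonomial] using h ⟨2 * k + 1, by omega⟩,
      funext fun i => ?_⟩
    have hi := h i
    simp only [xMonomial] at hi ⊢
    split_ifs at hi ⊢ with h1 h2
    · exact congrArg u (Fin.ext h1)
    · exact congrArg u (Fin.ext h2)
    · omega
  · rintro ⟨a', ha', b', hb', rfl⟩ i
    simp only [xMonomial]
    split_ifs <;> omega

theorem le_yMonomial_iff {k c : ℕ} (hk : k < s₂) {u : Fin (2 * s₁ + s₂) → ℕ} :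
    u ≤ yMonomial s₁ s₂ k c ↔ ∃ c' ≤ c, u = yMonomial s₁ s₂ k c' := by
  constructor
  · intro h
    refine ⟨u ⟨2 * s₁ + k, by omega⟩, by simpa [yMonomial] using h ⟨2 * s₁ + k, by omega⟩,
      funext fun i => ?_⟩
    have hi := h i
    simp only [yMonomial] at hi ⊢
    split_ifs at hi ⊢ with h1
    · exact congrArg u (Fin.ext h1)
    · omega
  · rintro ⟨c', hc', rfl⟩ i
    simp only [yMonomial]
    split_ifs <;> omega

theorem hVec_divisorSet_xMonomial {k b i : ℕ} (hk : k < s₁) (hi : 1 ≤ i) (hib : i ≤ b) :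
    hVec (divisorSet (xMonomial s₁ s₂ k 1 b)) i = 2 := by
  have hfilter : (divisorSet (xMonomial s₁ s₂ k 1 b)).filter (fun u => mdeg u = i) =
      {xMonomial s₁ s₂ k 0 i, xMonomial s₁ s₂ k 1 (i - 1)} := by
    ext u
    simp only [mem_filter, mem_divisorSet, le_xMonomial_iff hk, mem_insert, mem_singleton]
    constructor
    · rintro ⟨⟨a, ha, b', hb', rfl⟩, hdeg⟩
      rw [mdeg_xMonomial hk] at hdeg
      obtain rfl | rfl : a = 0 ∨ a = 1 := by omega
      · exact Or.inl (by rw [← hdeg, zero_add])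
      · exact Or.inr (by rw [← hdeg, Nat.add_sub_cancel_left])
    · rintro (rfl | rfl)
      · exact ⟨⟨0, by omega, i, hib, rfl⟩, by rw [mdeg_xMonomial hk]; omega⟩
      · exact ⟨⟨1, le_rfl, i - 1, by omega, rfl⟩, by rw [mdeg_xMonomial hk]; omega⟩
  rw [hVec, hfilter, card_pair]
  intro h
  simpa [xMonomial] using congrFun h ⟨2 * k, by omega⟩

theorem hVec_divisorSet_yMonomial {k c i : ℕ} (hk : k < s₂) (hic : i ≤ c) :
    hVec (divisorSet (yMonomial s₁ s₂ k c)) i = 1 := by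
  rw [hVec, card_eq_one]
  refine ⟨yMonomial s₁ s₂ k i, eq_singleton_iff_unique_mem.mpr ⟨?_, fun v hv => ?_⟩⟩
  · exact mem_filter.mpr ⟨mem_divisorSet.mpr ((le_yMonomial_iff hk).mpr ⟨i, hic, rfl⟩),
      mdeg_yMonomial hk i⟩
  · obtain ⟨hvc, rfl⟩ := mem_filter.mp hv
    obtain ⟨c', -, rfl⟩ := (le_yMonomial_iff hk).mp (mem_divisorSet.mp hvc)
    rw [mdeg_yMonomial hk]

theorem sum_gens9 {M : Type*} [AddCommMonoid M] {n : ℕ} (hn : 1 ≤ n)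
    (f : (Fin (2 * s₁ + s₂) → ℕ) → M) :
    ∑ g ∈ gens9 n s₁ s₂, f g = ∑ k ∈ range s₁, f (xMonomial s₁ s₂ k 1 (n - 1)) +
      ∑ k ∈ range s₂, f (yMonomial s₁ s₂ k n) := by
  have hdisj : Disjoint ((range s₁).image (fun k => xMonomial s₁ s₂ k 1 (n - 1)))
      ((range s₂).image (fun k => yMonomial s₁ s₂ k n)) := by
    simp only [disjoint_left, mem_image, mem_range]
    rintro _ ⟨k, hk, rfl⟩ ⟨k', hk', h⟩
    have := congrFun h ⟨2 * s₁ + k', by omega⟩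
    simp only [xMonomial, yMonomial] at this
    split_ifs at this <;> omega
  rw [gens9_eq, sum_union hdisj, sum_image, sum_image]
  · intro k hk k' hk' h
    have := congrFun h ⟨2 * s₁ + k, by simp at hk; omega⟩
    simp only [yMonomial] at this
    split_ifs at this <;> omega
  · intro k hk k' hk' h
    have := congrFun h ⟨2 * k, by simp at hk; omega⟩
    simp only [xMonomial] at this
    split_ifs at this <;> omega

theorem mdeg_of_mem_gens9 {n : ℕ} (hn : 1 ≤ n) {g : Fin (2 * s₁ + s₂) → ℕ}
    (hg : g ∈ gens9 n s₁ s₂) : mdeg g = n := by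
  simp only [gens9_eq, mem_union, mem_image, mem_range] at hg
  rcases hg with ⟨k, hk, rfl⟩ | ⟨k, hk, rfl⟩
  · rw [mdeg_xMonomial hk]; omega
  · rw [mdeg_yMonomial hk]

theorem gens9_nonempty (n : ℕ) (hs : ¬(s₁ = 0 ∧ s₂ = 0)) : (gens9 n s₁ s₂).Nonempty := by
  simp only [gens9_eq, union_nonempty, image_nonempty, nonempty_range_iff]
  omega

theorem gens9_support_disjoint (n : ℕ) :
    ∀ g ∈ gens9 n s₁ s₂, ∀ g' ∈ gens9 n s₁ s₂, g ≠ g' → ∀ j, g j = 0 ∨ g' j = 0 := by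
  simp only [gens9_eq, mem_union, mem_image, mem_range]
  rintro _ (⟨k, hk, rfl⟩ | ⟨k, hk, rfl⟩) _ (⟨k', hk', rfl⟩ | ⟨k', hk', rfl⟩) hne j <;>
  obtain rfl | hkk' := eq_or_ne k k' <;>
  first
  | exact absurd rfl hne
  | simp only [xMonomial, yMonomial]; split_ifs <;> omega

theorem hVec_generatedIdeal_gens9_of_lt {n i : ℕ} (hi : 1 ≤ i) (hin : i < n) :
    hVec (generatedIdeal (gens9 n s₁ s₂)) i = 2 * s₁ + s₂ := by
  rw [hVec_generatedIdeal_eq_sum (gens9_support_disjoint n) (by omega), sum_gens9 (by omega),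
    sum_congr rfl fun k hk => hVec_divisorSet_xMonomial (mem_range.mp hk) hi (by omega),
    sum_congr rfl fun k hk => hVec_divisorSet_yMonomial (mem_range.mp hk) hin.le]
  simp [mul_comm]

theorem hVec_generatedIdeal_gens9_self {n : ℕ} (hn : 1 ≤ n) :
    hVec (generatedIdeal (gens9 n s₁ s₂)) n = s₁ + s₂ := by
  rw [hVec_generatedIdeal_eq_sum (gens9_support_disjoint n) (by omega),
    sum_congr rfl fun g hg => mdeg_of_mem_gens9 hn hg ▸ hVec_divisorSet_mdeg g,
    sum_gens9 hn]
  simp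

end Generators

/-- The order ideal generated by the monomials
`x_1 x_2^(n-1), ..., x_{2s₁-1} x_{2s₁}^(n-1), y_1^n, ..., y_{s₂}^n` is a pure
order ideal with h-vector `(1, 2s₁+s₂, ..., 2s₁+s₂, s₁+s₂)` of length `n+1`. -/
theorem stmt_9 (n s₁ s₂ : ℕ) (hn : 2 ≤ n) (hs : ¬(s₁ = 0 ∧ s₂ = 0)) :
    IsOrderIdeal (generatedIdeal (gens9 n s₁ s₂)) ∧
    IsPure (generatedIdeal (gens9 n s₁ s₂)) ∧
    hVector (generatedIdeal (gens9 n s₁ s₂)) =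
      1 :: (List.replicate (n - 1) (2 * s₁ + s₂) ++ [s₁ + s₂]) := by
  have hn1 : 1 ≤ n := by omega
  have hdeg : ∀ g ∈ gens9 n s₁ s₂, mdeg g = n := fun g hg => mdeg_of_mem_gens9 hn1 hg
  have hideal := isOrderIdeal_generatedIdeal (gens9_nonempty n hs)
  refine ⟨hideal, isPure_generatedIdeal hdeg, ?_⟩
  rw [hVector, topDegree_generatedIdeal (gens9_nonempty n hs) hdeg,
    List.map_range_succ_eq_cons_replicate_append hn1
      fun i hi hin => hVec_generatedIdeal_gens9_of_lt hi hin,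
    hVec_zero hideal, hVec_generatedIdeal_gens9_self hn1]
end
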